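/- In the linearized polynomial fuzzy vault scheme: if κ is a linearized polynomial of q-degree less than ℓ (in powers q^{s·i}, s coprime to n), A is an F_q-basis of F_{q^n}, W is a submitted F_q-basis with d_Δ(A,W) ≤ 2⌊(n-ℓ)/2⌋, and c' is the received word (g_i, L_Z(g_i))_{i=1}^n, then the rank distance between c' and the secret codeword c = (g_i, κ(g_i))_{i=1}^n is at most ⌊(n-ℓ)/2⌋, so decoding the Gabidulin code G_{ℓ,s}(g_1,...,g_n) up to its error-correcting capability recovers κ. -/

import Mathlib

/-!
Away from the genuine points of `W` the received word `c'` agrees with `c`, so the error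
`c - c'` takes at most `|G \ W| = d_Δ(A, W) / 2` nonzero values and has rank at most
`⌊(n - ℓ)/2⌋`. If another codeword `c''` were as close to `c'`, then `c'' - c` would be the
evaluation on the basis `g` of a nonzero `σ`-linearized map `D` of `σ`-degree `< ℓ`
(`σ = Frob^s`) with `rank D ≤ n - ℓ`. That is impossible: for `v ∈ ker D`, `D` is right
divisible by `σ - σ(v)/v`, whose kernel is the line `F v` because the fixed field of `σ` is
`F` (here `gcd(s, n) = 1`), so by induction `dim ker D < ℓ`.
-/

open Module Submodule FiniteField

section
variable {R V : Type*} [Field R] [AddCommGroup V] [Module R V] {ι : Type*} [Fintype ι]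

theorem finrank_span_range_le_card_ne_zero [DecidableEq V] (u : ι → V) :
    finrank R (span R (Set.range u)) ≤ (Finset.univ.filter fun j => u j ≠ 0).card := by
  have hle : span R (Set.range u) ≤ span R (Set.range fun j : {j // u j ≠ 0} => u j) := by
    rw [span_le]
    rintro _ ⟨j, rfl⟩
    by_cases hj : u j = 0
    · simp [hj]
    · exact subset_span ⟨⟨j, hj⟩, rfl⟩
  have := FiniteDimensional.span_of_finite R (Set.finite_range fun j : {j // u j ≠ 0} => u j)
  calc finrank R (span R (Set.range u))
      ≤ finrank R (span R (Set.range fun j : {j // u j ≠ 0} => u j)) := finrank_mono hle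
    _ ≤ Fintype.card {j // u j ≠ 0} := finrank_range_le_card _
    _ = _ := Fintype.card_subtype _

theorem finrank_span_range_sub_le (u w : ι → V) :
    finrank R (span R (Set.range (u - w))) ≤
      finrank R (span R (Set.range u)) + finrank R (span R (Set.range w)) := by
  have := FiniteDimensional.span_of_finite R (Set.finite_range u)
  have := FiniteDimensional.span_of_finite R (Set.finite_range w)
  have : span R (Set.range (u - w)) ≤ span R (Set.range u) ⊔ span R (Set.range w) :=
    span_le.mpr <| by
      rintro _ ⟨j, rfl⟩
      exact sub_mem (mem_sup_left (subset_span ⟨j, rfl⟩)) (mem_sup_right (subset_span ⟨j, rfl⟩))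
  exact (finrank_mono this).trans (finrank_add_le_finrank_add_finrank _ _)

theorem finrank_span_range_sub_le_card_sdiff [DecidableEq V] {α : Type*} [DecidableEq α]
    {g : ι → α} (hg : Function.Injective g) (W : Finset α) {u w : ι → V}
    (h : ∀ j, g j ∈ W → u j = w j) :
    finrank R (span R (Set.range (u - w))) ≤ (Finset.univ.image g \ W).card := by
  calc finrank R (span R (Set.range (u - w)))
      ≤ (Finset.univ.filter fun j => (u - w) j ≠ 0).card := finrank_span_range_le_card_ne_zero _
    _ ≤ (Finset.univ.filter fun j => g j ∉ W).card :=
        Finset.card_le_card <| Finset.monotone_filter_right _ fun j _ hj hW =>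
          hj (sub_eq_zero.mpr (h j hW))
    _ = (Finset.univ.image g \ W).card := by
        rw [Finset.sdiff_eq_filter, Finset.filter_image, Finset.card_image_of_injective _ hg]

end

theorem LinearMap.span_range_comp_eq_range {R V W ι : Type*} [Semiring R] [AddCommMonoid V]
    [Module R V] [AddCommMonoid W] [Module R W] (D : V →ₗ[R] W) {g : ι → V}
    (hg : span R (Set.range g) = ⊤) : span R (Set.range (D ∘ g)) = LinearMap.range D := by
  rw [Set.range_comp, ← map_span, hg, Submodule.map_top]

theorem LinearMap.finrank_ker_comp_le {R V : Type*} [Field R] [AddCommGroup V] [Module R V]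
    [FiniteDimensional R V] (Q E : V →ₗ[R] V) :
    finrank R (ker (Q ∘ₗ E)) ≤ finrank R (ker Q) + finrank R (ker E) := by
  have hE : ∀ x ∈ ker (Q ∘ₗ E), E x ∈ ker Q := fun _ hx => hx
  have hker : finrank R (ker (E.restrict hE)) = finrank R (ker E) := by
    rw [ker_restrict]
    exact (comapSubtypeEquivOfLe (ker_le_ker_comp E Q)).finrank_eq
  have := (E.restrict hE).finrank_range_add_finrank_ker
  have := (range (E.restrict hE)).finrank_le
  omega

namespace AlgHom
variable {F K : Type*} [Field F] [Field K] [Algebra F K] (σ : K →ₐ[F] K)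

/-- The `σ`-linearized maps `x ↦ ∑ i < m, δ i * σ^i x` of `σ`-degree less than `m`. -/
def linearizedMaps (m : ℕ) : Submodule K (K →ₗ[F] K) :=
  span K (Set.range fun i : Fin m => (σ ^ (i : ℕ)).toLinearMap)

theorem pow_mem_linearizedMaps {i m : ℕ} (h : i < m) :
    (σ ^ i).toLinearMap ∈ σ.linearizedMaps m :=
  subset_span ⟨⟨i, h⟩, rfl⟩

theorem pow_succ_toLinearMap_eq_comp_add (c : K) (i : ℕ) :
    (σ ^ (i + 1)).toLinearMap =
      (σ ^ i).toLinearMap ∘ₗ (σ.toLinearMap - c • LinearMap.id) +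
        (σ ^ i) c • (σ ^ i).toLinearMap := by
  ext x
  simp [pow_succ]

/-- Right division by `σ - c` in the ring of `σ`-linearized maps. -/
theorem exists_eq_comp_add_of_mem_linearizedMaps (c : K) {m : ℕ} {D : K →ₗ[F] K}
    (hD : D ∈ σ.linearizedMaps (m + 1)) :
    ∃ D' ∈ σ.linearizedMaps m, ∃ r : K,
      D = D' ∘ₗ (σ.toLinearMap - c • LinearMap.id) + r • LinearMap.id := by
  have hpow : ∀ i ≤ m, ∃ D' ∈ σ.linearizedMaps m, ∃ r : K,
      (σ ^ i).toLinearMap = D' ∘ₗ (σ.toLinearMap - c • LinearMap.id) + r • LinearMap.id := by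
    intro i hi
    induction i with
    | zero => exact ⟨0, zero_mem _, 1, by ext; simp⟩
    | succ i ih =>
      obtain ⟨D', hD', r, hr⟩ := ih (by omega)
      refine ⟨(σ ^ i).toLinearMap + (σ ^ i) c • D',
        add_mem (σ.pow_mem_linearizedMaps (by omega)) (smul_mem _ _ hD'), (σ ^ i) c * r, ?_⟩
      rw [pow_succ_toLinearMap_eq_comp_add σ c]
      nth_rw 2 [hr]
      rw [LinearMap.add_comp, LinearMap.smul_comp, smul_add, mul_smul, add_assoc]
  induction hD using span_induction with
  | mem _ hD =>
    obtain ⟨i, rfl⟩ := hD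
    exact hpow i (by omega)
  | zero => exact ⟨0, zero_mem _, 0, by simp⟩
  | add _ _ _ _ h₁ h₂ =>
    obtain ⟨D₁, hD₁, r₁, rfl⟩ := h₁
    obtain ⟨D₂, hD₂, r₂, rfl⟩ := h₂
    exact ⟨D₁ + D₂, add_mem hD₁ hD₂, r₁ + r₂, by rw [LinearMap.add_comp, add_smul]; abel⟩
  | smul a _ _ h =>
    obtain ⟨D', hD', r, rfl⟩ := h
    exact ⟨a • D', smul_mem _ a hD', a * r, by rw [LinearMap.smul_comp, smul_add, mul_smul]⟩

theorem ker_sub_smul_le_span (hσ : ∀ x, σ x = x → x ∈ Set.range (algebraMap F K)) {v : K}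
    (hv : v ≠ 0) : LinearMap.ker (σ.toLinearMap - (σ v / v) • LinearMap.id) ≤ F ∙ v := by
  intro x hx
  have hfix : σ (x / v) = x / v := by
    rw [LinearMap.mem_ker, LinearMap.sub_apply, sub_eq_zero] at hx
    simp only [toLinearMap_apply, LinearMap.smul_apply, LinearMap.id_apply, smul_eq_mul] at hx
    have : σ v ≠ 0 := (map_ne_zero σ).mpr hv
    rw [map_div₀, hx]
    field_simp
  obtain ⟨a, ha⟩ := hσ _ hfix
  refine mem_span_singleton.mpr ⟨a, ?_⟩
  rw [Algebra.smul_def, ha]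
  field_simp

theorem finrank_ker_lt_of_mem_linearizedMaps [FiniteDimensional F K]
    (hσ : ∀ x, σ x = x → x ∈ Set.range (algebraMap F K)) {m : ℕ} {D : K →ₗ[F] K}
    (hD : D ∈ σ.linearizedMaps m) (hD0 : D ≠ 0) : finrank F (LinearMap.ker D) < m := by
  induction m generalizing D with
  | zero =>
    exact absurd (by simpa [linearizedMaps] using hD) hD0
  | succ m ih =>
    by_cases hker : LinearMap.ker D = ⊥
    · rw [hker, finrank_bot]
      omega
    obtain ⟨v, hvD, hv⟩ := (LinearMap.ker D).ne_bot_iff.mp hker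
    set E := σ.toLinearMap - (σ v / v) • LinearMap.id
    have hEv : E v = 0 := by simp [E, hv]
    obtain ⟨D', hD', r, hDr⟩ := σ.exists_eq_comp_add_of_mem_linearizedMaps (σ v / v) hD
    have hr : r = 0 := by
      rw [LinearMap.mem_ker, hDr] at hvD
      simpa [hEv, hv] using hvD
    have hDE : D = D' ∘ₗ E := by rw [hDr, hr, zero_smul, add_zero]
    have hD'0 : D' ≠ 0 := by rintro rfl; exact hD0 (by rw [hDE, LinearMap.zero_comp])
    have hE : finrank F (LinearMap.ker E) ≤ 1 :=
      (finrank_mono (σ.ker_sub_smul_le_span hσ hv)).trans (finrank_span_singleton hv).le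
    have := LinearMap.finrank_ker_comp_le D' E
    have := ih hD' hD'0
    rw [hDE]
    omega

/-- The MRD property of Gabidulin codes. -/
theorem eq_zero_of_finrank_range_add_le [FiniteDimensional F K]
    (hσ : ∀ x, σ x = x → x ∈ Set.range (algebraMap F K)) {m : ℕ} {D : K →ₗ[F] K}
    (hD : D ∈ σ.linearizedMaps m) (h : finrank F (LinearMap.range D) + m ≤ finrank F K) :
    D = 0 := by
  by_contra hD0
  have := σ.finrank_ker_lt_of_mem_linearizedMaps hσ hD hD0
  have := D.finrank_range_add_finrank_ker
  omega

end AlgHom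

namespace FiniteField
variable {Fq K : Type*} [Field Fq] [Fintype Fq] [Field K] [Algebra Fq K]

theorem frobeniusAlgHom_pow_apply (s : ℕ) (x : K) :
    (frobeniusAlgHom Fq K ^ s) x = x ^ Fintype.card Fq ^ s := by
  rw [AlgHom.coe_pow, coe_frobeniusAlgHom, pow_iterate]

theorem mem_range_algebraMap_of_frobeniusAlgHom_pow_apply_eq [FiniteDimensional Fq K] {s : ℕ}
    (hs : s.Coprime (finrank Fq K)) {x : K} (hx : (frobeniusAlgHom Fq K ^ s) x = x) :
    x ∈ Set.range (algebraMap Fq K) := by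
  have : Fintype K := Module.fintypeOfFintype (Module.Free.chooseBasis Fq K)
  set φ := frobeniusAlgEquivOfAlgebraic Fq K
  have hφs : Function.IsPeriodicPt φ s x := by
    rw [Function.IsPeriodicPt, Function.IsFixedPt, coe_frobeniusAlgEquivOfAlgebraic_iterate]
    exact (frobeniusAlgHom_pow_apply s x).symm.trans hx
  have hφn : Function.IsPeriodicPt φ (finrank Fq K) x := by
    rw [Function.IsPeriodicPt, Function.IsFixedPt, coe_frobeniusAlgEquivOfAlgebraic_iterate,
      ← card_eq_pow_finrank]
    exact pow_card x
  have hφ : Function.IsFixedPt φ x := by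
    simpa [Function.IsPeriodicPt, hs.gcd_eq_one] using hφs.gcd hφn
  rw [IsGalois.mem_range_algebraMap_iff_fixed]
  intro g
  obtain ⟨k, rfl⟩ := (bijective_frobeniusAlgEquivOfAlgebraic_pow Fq K).2 g
  rw [AlgEquiv.coe_pow]
  exact hφ.iterate k

end FiniteField

theorem fuzzy_vault_recovers_key_general (q n ℓ s : ℕ) (Fq K : Type*) [Field Fq] [Fintype Fq]
    [Field K] [Algebra Fq K] [FiniteDimensional Fq K] [DecidableEq K]
    (hq : Fintype.card Fq = q) (hn : Module.finrank Fq K = n)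
    (hℓ : ℓ < n) (hs : Nat.Coprime s n)
    (g : Fin n → K) (hg : LinearIndependent Fq g)
    (W : Finset K) (hW : W.card = n)
    (f : Fin ℓ → K) (κ : K → K) (hκ : κ = fun x => ∑ i : Fin ℓ, f i * x ^ q ^ (s * (i : ℕ)))
    (L : K →ₗ[Fq] K)
    (hLW : ∀ j, g j ∈ W → L (g j) = κ (g j))
    (hΔ : (Finset.image g Finset.univ \ W).card + (W \ Finset.image g Finset.univ).card
        ≤ 2 * ((n - ℓ) / 2))
    (c c' : Fin n → K) (hc : c = fun j => κ (g j)) (hc' : c' = fun j => L (g j)) :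
    Module.finrank Fq (Submodule.span Fq (Set.range (c - c'))) ≤ (n - ℓ) / 2 ∧
    ∀ f' : Fin ℓ → K,
      Module.finrank Fq (Submodule.span Fq
          (Set.range (fun j => (∑ i : Fin ℓ, f' i * g j ^ q ^ (s * (i : ℕ))) - c' j)))
        ≤ (n - ℓ) / 2 →
      (fun j => ∑ i : Fin ℓ, f' i * g j ^ q ^ (s * (i : ℕ))) = c := by
  subst hq hn
  have herr : finrank Fq (span Fq (Set.range (c - c'))) ≤ (finrank Fq K - ℓ) / 2 := by
    have := finrank_span_range_sub_le_card_sdiff (R := Fq) hg.injective W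
      (u := c) (w := c') fun j hj => by simp [hc, hc', hLW j hj]
    have := Finset.card_sdiff_comm (s := Finset.univ.image g) (t := W) <| by
      rw [Finset.card_image_of_injective _ hg.injective, Finset.card_univ, Fintype.card_fin, hW]
    omega
  refine ⟨herr, fun f' hf' => ?_⟩
  set c'' : Fin (finrank Fq K) → K :=
    fun j => ∑ i : Fin ℓ, f' i * g j ^ Fintype.card Fq ^ (s * (i : ℕ))
  set σ := frobeniusAlgHom Fq K ^ s
  set D : K →ₗ[Fq] K := ∑ i : Fin ℓ, (f' i - f i) • (σ ^ (i : ℕ)).toLinearMap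
  have hDmem : D ∈ σ.linearizedMaps ℓ :=
    sum_mem fun i _ => smul_mem _ _ (σ.pow_mem_linearizedMaps i.2)
  have hDg : D ∘ g = c'' - c := by
    funext j
    simp only [D, σ, c'', hc, hκ, Function.comp_apply, Pi.sub_apply, LinearMap.sum_apply,
      LinearMap.smul_apply, AlgHom.toLinearMap_apply, ← pow_mul, frobeniusAlgHom_pow_apply,
      smul_eq_mul, sub_mul, Finset.sum_sub_distrib]
  have hrank : finrank Fq (LinearMap.range D) ≤ finrank Fq K - ℓ := by
    rw [← D.span_range_comp_eq_range (hg.span_eq_top_of_card_eq_finrank' (Fintype.card_fin _)),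
      hDg, ← sub_sub_sub_cancel_right c'' c c']
    have hc'' : finrank Fq (span Fq (Set.range (c'' - c'))) ≤ (finrank Fq K - ℓ) / 2 := hf'
    have := finrank_span_range_sub_le (R := Fq) (c'' - c') (c - c')
    omega
  have hD : D = 0 :=
    σ.eq_zero_of_finrank_range_add_le
      (fun _ hx => mem_range_algebraMap_of_frobeniusAlgHom_pow_apply_eq hs hx) hDmem (by omega)
  rw [← sub_eq_zero, ← hDg, hD]
  rfl

/-- Linearized polynomial fuzzy vault: if d_Δ(A,W) ≤ 2⌊(n-ℓ)/2⌋ then the received word c'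
is within rank distance ⌊(n-ℓ)/2⌋ of the secret codeword c, and c is the unique codeword of
the Gabidulin code within that radius, so decoding recovers the key κ. -/
theorem fuzzy_vault_recovers_key (q n ℓ s : ℕ) (Fq K : Type*) [Field Fq] [Fintype Fq]
    [Field K] [Algebra Fq K] [FiniteDimensional Fq K] [DecidableEq K]
    (hq : Fintype.card Fq = q) (hn : Module.finrank Fq K = n)
    (hℓ : ℓ < n) (hs : Nat.Coprime s n)
    (g : Fin n → K) (hg : LinearIndependent Fq g)
    (W : Finset K) (hW : W.card = n)
    (hWi : LinearIndependent Fq ((↑·) : ↥((W : Finset K) : Set K) → K))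
    (f : Fin ℓ → K) (κ : K → K) (hκ : κ = fun x => ∑ i : Fin ℓ, f i * x ^ q ^ (s * (i : ℕ)))
    (L : K →ₗ[Fq] K)
    (hLW : ∀ j, g j ∈ W → L (g j) = κ (g j))
    (hchaff : ∀ x ∈ W, x ∉ Finset.image g Finset.univ → L x ≠ κ x)
    (hΔ : (Finset.image g Finset.univ \ W).card + (W \ Finset.image g Finset.univ).card
        ≤ 2 * ((n - ℓ) / 2))
    (c c' : Fin n → K) (hc : c = fun j => κ (g j)) (hc' : c' = fun j => L (g j)) :
    Module.finrank Fq (Submodule.span Fq (Set.range (c - c'))) ≤ (n - ℓ) / 2 ∧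
    ∀ f' : Fin ℓ → K,
      Module.finrank Fq (Submodule.span Fq
          (Set.range (fun j => (∑ i : Fin ℓ, f' i * g j ^ q ^ (s * (i : ℕ))) - c' j)))
        ≤ (n - ℓ) / 2 →
      (fun j => ∑ i : Fin ℓ, f' i * g j ^ q ^ (s * (i : ℕ))) = c :=
  fuzzy_vault_recovers_key_general q n ℓ s Fq K hq hn hℓ hs g hg W hW f κ hκ L hLW hΔ c c' hc hc'
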